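/- arXiv:1501.00183 — 5 statements merged into one kernel-verified Lean document; each statement's English description precedes it below -/
import Mathlib

section
/- If A is a finite commutative ring, a is an ideal of A, b = Ann_A(a) is the annihilator of a in A, and a ∩ b = 0, then a² = a. -/
theorem sq_eq_self_of_inf_annihilator_eq_bot (A : Type*) [CommRing A] [Finite A]
    (a : Ideal A) (h : a ⊓ Submodule.annihilator a = ⊥) : a * a = a := by
  -- pigeonhole: powers of a repeat
  have hfin : Finite (Ideal A) := by
    exact Finite.of_injective (fun I : Ideal A => (I : Set A)) fun I J hIJ => by
      ext x; exact Set.ext_iff.mp hIJ x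
  obtain ⟨i, j, hij, hpow⟩ : ∃ i j : ℕ, i ≠ j ∧ a ^ (i + 1) = a ^ (j + 1) := by
    obtain ⟨i, j, hij, hpow⟩ := Finite.exists_ne_map_eq_of_infinite
      (fun n : ℕ => a ^ (n + 1))
    exact ⟨i, j, hij, hpow⟩
  wlog hlt : i < j generalizing i j
  · exact this j i hij.symm hpow.symm (by omega)
  -- a^(i+1) = a^(i+2)
  have hstab : a ^ (i + 1) = a ^ (i + 2) := by
    have h1 : a ^ (j + 1) ≤ a ^ (i + 2) := Ideal.pow_le_pow_right (by omega)
    have h2 : a ^ (i + 2) ≤ a ^ (i + 1) := Ideal.pow_le_pow_right (by omega)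
    exact le_antisymm (hpow ▸ h1) h2
  -- Nakayama
  have hfg : (a ^ (i + 1)).FG := by
    have : IsNoetherian A A := by
      infer_instance
    exact IsNoetherian.noetherian _
  have hle : a ^ (i + 1) ≤ a • a ^ (i + 1) := by
    rw [Ideal.smul_eq_mul, ← pow_succ']
    exact hstab.le
  obtain ⟨r, hr1, hr0⟩ :=
    Submodule.exists_sub_one_mem_and_smul_eq_zero_of_fg_of_le_smul a (a ^ (i + 1)) hfg hle
  -- descend: r kills a^(m+1) for all m down to 0
  have key : ∀ m : ℕ, (∀ x ∈ a ^ (m + 1), r * x = 0) → ∀ x ∈ a, r * x = 0 := by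
    intro m
    induction m with
    | zero => intro hm x hx; exact hm x (by simpa using hx)
    | succ m ih =>
      intro hm
      apply ih
      intro x hx
      have hmem : r * x ∈ a ⊓ Submodule.annihilator a := by
        constructor
        · have : a ^ (m + 1) ≤ a := Ideal.pow_le_self (by omega)
          exact a.mul_mem_left r (this hx)
        · refine Submodule.mem_annihilator.mpr fun y hy => ?_
          have hxy : x * y ∈ a ^ (m + 2) := by
            rw [pow_succ]
            exact Ideal.mul_mem_mul hx hy
          have := hm (x * y) hxy
          change (r * x) * y = 0
          rw [mul_assoc]; exact this
      rw [h] at hmem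
      simpa using hmem
  have hr : ∀ x ∈ a, r * x = 0 := by
    apply key i
    intro x hx
    exact hr0 x hx
  -- conclude: x = -(r - 1) * x ∈ a * a
  rw [le_antisymm_iff]
  constructor
  · exact Ideal.mul_le_left.trans (le_refl a)
  · intro x hx
    have : x = -(r - 1) * x := by
      linear_combination hr x hx
    rw [this]
    exact Ideal.mul_mem_mul (a.neg_mem hr1) hx
end

section
/- If A is a finite commutative ring, a is an ideal of A, b = Ann_A(a), and a ∩ b = 0, then there exists an idempotent e ∈ A such that a = eA, b = (1−e)A, and A = b ⊕ a as an internal direct sum of ideals. -/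
theorem exists_idempotent_of_inf_annihilator_eq_bot (A : Type*) [CommRing A] [Finite A]
    (a : Ideal A) (h : a ⊓ Submodule.annihilator a = ⊥) :
    ∃ e : A, IsIdempotentElem e ∧ a = Ideal.span {e} ∧
      Submodule.annihilator a = Ideal.span {1 - e} ∧
      Submodule.annihilator a ⊔ a = ⊤ ∧ Submodule.annihilator a ⊓ a = ⊥ := by
  have hfin : Finite (Ideal A) :=
    Finite.of_injective (fun I => (I : Set A)) SetLike.coe_injective
  -- pigeonhole: a^(k+1) = a^(l+1) for some k < l
  obtain ⟨k, l, hkl, hpow⟩ : ∃ k l : ℕ, k < l ∧ a ^ (k + 1) = a ^ (l + 1) := by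
    obtain ⟨k, l, hne, heq⟩ := Finite.exists_ne_map_eq_of_infinite (fun n : ℕ => a ^ (n + 1))
    rcases Nat.lt_or_gt_of_ne hne with h' | h'
    · exact ⟨k, l, h', heq⟩
    · exact ⟨l, k, h', heq.symm⟩
  set s := k + 1 with hs
  -- a^(s+1) = a^s
  have hstep : a ^ (s + 1) = a ^ s := by
    apply le_antisymm (Ideal.pow_le_pow_right (Nat.le_succ s))
    calc a ^ s = a ^ (l + 1) := hpow
      _ ≤ a ^ (s + 1) := Ideal.pow_le_pow_right (by omega)
  -- hence a^(s+j) = a^s for all j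
  have hstab : ∀ j : ℕ, a ^ (s + j) = a ^ s := by
    intro j
    induction j with
    | zero => rfl
    | succ j ih => rw [← Nat.add_assoc, pow_succ, ih, ← pow_succ, hstep]
  have hidem : IsIdempotentElem (a ^ s) := by
    show a ^ s * a ^ s = a ^ s
    rw [← pow_add, hstab]
  have hfg : (a ^ s).FG := IsNoetherian.noetherian _
  obtain ⟨e, he, hce⟩ := (Ideal.isIdempotentElem_iff_of_fg _ hfg).mp hidem
  have hce : a ^ s = Ideal.span {e} := hce
  -- J = a ⊓ span{1-e} is ⊥
  set J : Ideal A := a ⊓ Ideal.span {1 - e} with hJ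
  have hJs : J * a ^ s = ⊥ := by
    rw [hce, eq_bot_iff]
    calc J * Ideal.span {e} ≤ Ideal.span {1 - e} * Ideal.span {e} :=
          Ideal.mul_mono inf_le_right le_rfl
      _ = Ideal.span {(1 - e) * e} := Ideal.span_singleton_mul_span_singleton _ _
      _ = ⊥ := by rw [sub_mul, one_mul, he.eq, sub_self, Ideal.span_singleton_eq_bot.mpr rfl]
  have hdown : ∀ j : ℕ, J * a ^ (j + 1) = ⊥ → J * a ^ j = ⊥ := by
    intro j hj
    rw [eq_bot_iff, ← h]
    refine le_inf (Ideal.mul_le_left.trans inf_le_left) ?_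
    intro x hx
    rw [Submodule.mem_annihilator]
    intro n hn
    have : x * n ∈ J * a ^ (j + 1) := by
      rw [pow_succ, ← mul_assoc]
      exact Ideal.mul_mem_mul hx hn
    rw [hj] at this
    simpa using this
  have hJbot : J = ⊥ := by
    have : ∀ j : ℕ, J * a ^ (s - j) = ⊥ := by
      intro j
      induction j with
      | zero => simpa using hJs
      | succ j ih =>
        rcases Nat.lt_or_ge j s with h' | h'
        · have : s - j = (s - (j + 1)) + 1 := by omega
          rw [this] at ih
          exact hdown _ ih
        · have : s - (j + 1) = s - j := by omega
          rw [this]; exact ih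
    have := this s
    simpa using this
  -- a = span {e}
  have hae : a = Ideal.span {e} := by
    apply le_antisymm
    · intro x hx
      have hmem : (1 - e) * x ∈ J := by
        refine ⟨Ideal.mul_mem_left _ _ hx, ?_⟩
        exact Ideal.mul_mem_right _ _ (Ideal.mem_span_singleton_self _)
      rw [hJbot] at hmem
      have hx0 : (1 - e) * x = 0 := by simpa using hmem
      have : x = e * x := by
        have := sub_mul 1 e x
        rw [hx0, one_mul] at this
        linear_combination -this
      rw [this]
      exact Ideal.mul_mem_right _ _ (Ideal.mem_span_singleton_self _)
    · rw [← hce, ← hstab (s - 1)]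
      exact Ideal.pow_le_self (by omega)
  have hea : e ∈ a := hae ▸ Ideal.mem_span_singleton_self e
  have hann : Submodule.annihilator a = Ideal.span {1 - e} := by
    apply le_antisymm
    · intro z hz
      rw [Submodule.mem_annihilator] at hz
      have hze : z * e = 0 := hz e hea
      have : z = z * (1 - e) := by linear_combination hze
      rw [this]
      exact Ideal.mul_mem_left _ _ (Ideal.mem_span_singleton_self _)
    · rw [Ideal.span_le]
      rintro x rfl
      rw [SetLike.mem_coe, Submodule.mem_annihilator]
      intro n hn
      rw [hae, Ideal.mem_span_singleton] at hn
      obtain ⟨t, rfl⟩ := hn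
      show (1 - e) * (e * t) = 0
      have := he.eq
      linear_combination -t * this
  refine ⟨e, he, hae, hann, ?_, by rw [inf_comm, h]⟩
  rw [hann, hae, eq_top_iff]
  intro x _
  have : x = x * (1 - e) + x * e := by ring
  rw [this]
  exact Submodule.add_mem_sup (Ideal.mul_mem_left _ _ (Ideal.mem_span_singleton_self _))
    (Ideal.mul_mem_left _ _ (Ideal.mem_span_singleton_self _))
end

section
/- If A is a finite commutative ring, a is an ideal of A with Ann_A(a) = 0, and a ∩ Ann_A(a) = 0, then a = A. -/
theorem eq_top_of_annihilator_eq_bot (A : Type*) [CommRing A] [Finite A]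
    (a : Ideal A) (hb : Submodule.annihilator a = ⊥)
    (h : a ⊓ Submodule.annihilator a = ⊥) : a = ⊤ := by
  -- annihilator membership helper
  have hann : ∀ x : A, (∀ y ∈ a, x * y = 0) → x = 0 := by
    intro x hx
    have : x ∈ Submodule.annihilator a := by
      rw [Submodule.mem_annihilator]
      intro n hn
      exact hx n hn
    rw [hb] at this
    simpa using this
  -- powers of a stabilize by finiteness
  have hfin : Finite (Ideal A) := by
    exact Finite.of_injective (fun I : Ideal A => (I : Set A)) fun I J hIJ => by
      exact SetLike.coe_injective hIJ
  obtain ⟨m, n, hmn, hpow⟩ := Finite.exists_ne_map_eq_of_infinite (fun k : ℕ => a ^ k)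
  wlog hlt : m < n generalizing m n
  · exact this n m hmn.symm hpow.symm (by omega)
  have hle : a ^ m ≤ a • (a ^ m) := by
    have h1 : a ^ n ≤ a ^ (m + 1) := Ideal.pow_le_pow_right (by omega)
    have : a • (a ^ m) = a ^ (m + 1) := by
      rw [smul_eq_mul, pow_succ, mul_comm]
    rw [this, hpow]
    exact h1
  obtain ⟨r, hr, hr'⟩ := Submodule.exists_mem_and_smul_eq_self_of_fg_of_le_smul a (a ^ m)
    (IsNoetherian.noetherian _) hle
  -- show (1 - r) = 0 by downward induction on powers
  have key : ∀ k : ℕ, (∀ y ∈ a ^ k, (1 - r) * y = 0) → (1 - r) = 0 := by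
    intro k
    induction k with
    | zero => intro hk; simpa using hk 1 (by simp)
    | succ k ih =>
      intro hk
      apply ih
      intro z hz
      apply hann
      intro y hy
      have : z * y ∈ a ^ (k + 1) := by
        rw [pow_succ]
        exact Ideal.mul_mem_mul hz hy
      calc (1 - r) * z * y = (1 - r) * (z * y) := by ring
        _ = 0 := hk _ this
  have hs : (1 - r) = 0 := by
    apply key m
    intro y hy
    have := hr' y hy
    simp only [smul_eq_mul] at this
    rw [sub_mul, one_mul, this, sub_self]
  have : r = 1 := by linear_combination -hs
  rw [this] at hr
  exact Ideal.eq_top_of_isUnit_mem a hr isUnit_one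
end

section
/- Let R be a commutative ring, M an R-module, and I_A, I_B ideals of R with J = I_A ∩ I_B nilpotent. Suppose I_A·M = M, y ∈ M, and M = R·y + I_B·M. If moreover I_B·M = I_B·I_A·M, then M = R·y. -/
theorem eq_span_singleton_of_nilpotent_inf (R : Type*) (M : Type*) [CommRing R]
    [AddCommGroup M] [Module R M] (IA IB : Ideal R)
    (hJ : ∃ r : ℕ, 0 < r ∧ (IA ⊓ IB) ^ r = ⊥)
    (hIA : IA • (⊤ : Submodule R M) = ⊤) (y : M)
    (hy : (⊤ : Submodule R M) = Submodule.span R {y} ⊔ IB • (⊤ : Submodule R M))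
    (hIB : IB • (⊤ : Submodule R M) = IB • (IA • (⊤ : Submodule R M))) :
    (⊤ : Submodule R M) = Submodule.span R {y} := by
  obtain ⟨r, hr, hJr⟩ := hJ
  set N := Submodule.span R {y} with hN
  set J := IA ⊓ IB with hJdef
  have hIBle : IB • (⊤ : Submodule R M) ≤ J • ⊤ := by
    rw [hIB, ← Submodule.smul_assoc]
    refine Submodule.smul_mono ?_ le_rfl
    rw [Ideal.smul_eq_mul]
    exact le_inf Ideal.mul_le_right Ideal.mul_le_left
  have h1 : (⊤ : Submodule R M) = N ⊔ J • ⊤ := by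
    refine le_antisymm ?_ le_top
    calc (⊤ : Submodule R M) = N ⊔ IB • ⊤ := hy
      _ ≤ N ⊔ J • ⊤ := sup_le_sup_left hIBle N
  have key : ∀ n : ℕ, 0 < n → (⊤ : Submodule R M) = N ⊔ J ^ n • ⊤ := by
    intro n hn
    induction n with
    | zero => exact absurd hn (lt_irrefl 0)
    | succ k ih =>
      rcases Nat.eq_zero_or_pos k with hk | hk
      · subst hk
        rw [pow_one]
        exact h1
      · have hstep : J ^ k • (⊤ : Submodule R M) ≤ N ⊔ J ^ (k + 1) • ⊤ := by
          conv_lhs => rw [h1]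
          rw [Submodule.smul_sup]
          refine sup_le ?_ ?_
          · exact le_sup_of_le_left (Submodule.smul_le.2 fun r _ m hm =>
              Submodule.smul_mem N r hm)
          · rw [← Submodule.smul_assoc, Ideal.smul_eq_mul, ← pow_succ]
            exact le_sup_right
        refine le_antisymm ?_ le_top
        calc (⊤ : Submodule R M) = N ⊔ J ^ k • ⊤ := ih hk
          _ ≤ N ⊔ (N ⊔ J ^ (k + 1) • ⊤) := sup_le_sup_left hstep N
          _ = N ⊔ J ^ (k + 1) • ⊤ := by rw [← sup_assoc, sup_idem]
  have := key r hr
  rw [hJr] at this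
  simpa using this
end

section
/- Let A be a finite commutative ring, M a finite A-module, x ∈ M, a = Ann_A(x), b = Ann_A(a) with a ∩ b = 0. If the A/a-module M/aM is not generated by the image of x, then M is not a cyclic A-module. -/
/-- In a finite commutative ring, an ideal whose intersection with its annihilator is
trivial is generated by an idempotent. -/
theorem exists_idem_gen {A : Type*} [CommRing A] [Finite A] (a : Ideal A)
    (hinf : a ⊓ Submodule.annihilator a = ⊥) :
    ∃ e : A, IsIdempotentElem e ∧ a = Ideal.span {e} := by
  -- pigeonhole: powers of `a` repeat
  obtain ⟨i, j, hne, hij⟩ : ∃ i j : ℕ, i ≠ j ∧ a ^ (i + 1) = a ^ (j + 1) := by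
    obtain ⟨i, j, hne, h⟩ := Finite.exists_ne_map_eq_of_infinite (fun n : ℕ => a ^ (n + 1))
    exact ⟨i, j, hne, h⟩
  wlog hlt : i < j generalizing i j
  · exact this j i hne.symm hij.symm (by omega)
  set k := i + 1 with hk
  have hstab : a ^ k = a ^ (k + 1) := by
    apply le_antisymm
    · rw [hij]; exact Ideal.pow_le_pow_right (by omega)
    · exact Ideal.pow_le_pow_right (by omega)
  -- a^k is idempotent
  have hpow : ∀ n, k ≤ n → a ^ n = a ^ k := by
    intro n hn
    induction n with
    | zero => omega
    | succ m ih =>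
      rcases Nat.lt_or_ge k (m + 1) with h | h
      · have hm : k ≤ m := by omega
        rw [pow_succ, ih hm, ← pow_succ, ← hstab]
      · have : k = m + 1 := by omega
        rw [this]
  have hidem : IsIdempotentElem (a ^ k) := by
    show a ^ k * a ^ k = a ^ k
    rw [← pow_add]
    exact hpow _ (by omega)
  have hfg : (a ^ k).FG := IsNoetherian.noetherian _
  obtain ⟨e, he, hspan⟩ := (Ideal.isIdempotentElem_iff_of_fg _ hfg).mp hidem
  refine ⟨e, he, ?_⟩
  -- N := (1-e) * a is killed by a^k, hence by downward induction is ⊥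
  set N : Ideal A := Ideal.span {1 - e} * a with hN
  have hNk : N * a ^ k = ⊥ := by
    have : N * a ^ k = Ideal.span {1 - e} * (a * a ^ k) := by rw [hN, mul_assoc]
    rw [this, ← pow_succ', ← hstab, hspan, Ideal.submodule_span_eq,
      Ideal.span_singleton_mul_span_singleton]
    have h0 : (1 - e) * e = 0 := by linear_combination -he.eq
    rw [h0, Ideal.span_singleton_eq_bot.mpr rfl]
  have hNlea : N ≤ a := by
    rw [hN]; exact Ideal.mul_le_right
  have hdown : ∀ t : ℕ, N * a ^ (k - t) = ⊥ := by
    intro t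
    induction t with
    | zero => simpa using hNk
    | succ s ih =>
      rcases Nat.lt_or_ge s k with h | h
      · have hsub : k - s = (k - (s + 1)) + 1 := by omega
        have hmul : (N * a ^ (k - (s + 1))) * a = ⊥ := by
          rw [mul_assoc, ← pow_succ, ← hsub, ih]
        have hle1 : N * a ^ (k - (s + 1)) ≤ a := by
          refine le_trans ?_ hNlea
          first | exact Ideal.mul_le_left | exact Ideal.mul_le_right
        have hle2 : N * a ^ (k - (s + 1)) ≤ Submodule.annihilator a := by
          intro z hz
          rw [Submodule.mem_annihilator]
          intro w hw
          have : z * w ∈ (N * a ^ (k - (s + 1))) * a := Ideal.mul_mem_mul hz hw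
          rw [hmul] at this
          simpa using this
        have := le_inf hle1 hle2
        rw [hinf, le_bot_iff] at this
        exact this
      · have : k - (s + 1) = k - s := by omega
        rw [this, ih]
  have hN0 : N = ⊥ := by
    have := hdown k
    simpa using this
  -- now a = span {e}
  apply le_antisymm
  · intro z hz
    have hz' : (1 - e) * z ∈ N := Ideal.mul_mem_mul (Ideal.mem_span_singleton_self _) hz
    rw [hN0] at hz'
    have hz0 : (1 - e) * z = 0 := by simpa using hz'
    have : z = e * z := by linear_combination hz0
    rw [Ideal.mem_span_singleton]
    exact ⟨z, this⟩
  · rw [← Ideal.submodule_span_eq, ← hspan]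
    calc a ^ k ≤ a ^ 1 := Ideal.pow_le_pow_right (by omega)
    _ = a := pow_one a

theorem not_cyclic_of_not_generates_quotient (A : Type*) (M : Type*) [CommRing A] [Finite A]
    [AddCommGroup M] [Module A M] [Finite M] (x : M)
    (hinf : (Submodule.span A {x}).annihilator ⊓
      Submodule.annihilator ((Submodule.span A {x}).annihilator) = ⊥)
    (hnotgen : Submodule.span A {x} ⊔
      (Submodule.span A {x}).annihilator • (⊤ : Submodule A M) ≠ ⊤) :
    ¬ ∃ m : M, Submodule.span A {m} = ⊤ := by
  rintro ⟨m, hm⟩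
  apply hnotgen
  set a := (Submodule.span A {x}).annihilator with ha
  obtain ⟨e, he, hspan⟩ := exists_idem_gen a hinf
  set f := 1 - e with hf
  have hef : e * f = 0 := by
    have := he.eq
    simp only [hf, mul_sub, mul_one, this, sub_self]
  have hff : f * f = f := by
    show (1 - e) * (1 - e) = 1 - e
    linear_combination he.eq
  have hex : e • x = 0 := by
    have : e ∈ a := by rw [hspan]; exact Ideal.mem_span_singleton_self e
    rw [ha, Submodule.mem_annihilator_span_singleton] at this
    exact this
  have hfx : f • x = x := by
    rw [hf, sub_smul, one_smul, hex, sub_zero]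
  -- the two finite objects
  set If : Ideal A := Ideal.span {f} with hIf
  set N : Submodule A M := Submodule.span A {f • m} with hNdef
  -- f • z ∈ N for all z
  have hfzN : ∀ z : M, f • z ∈ N := by
    intro z
    have hz : z ∈ Submodule.span A {m} := hm ▸ Submodule.mem_top
    obtain ⟨c, hc⟩ := Submodule.mem_span_singleton.mp hz
    rw [← hc, smul_comm]
    exact Submodule.smul_mem _ _ (Submodule.mem_span_singleton_self _)
  -- injection If → N, t ↦ t • x
  have hxN : x ∈ N := by rw [← hfx]; exact hfzN x
  let φ : If → N := fun t => ⟨t.1 • x, by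
    obtain ⟨s, hs⟩ := Ideal.mem_span_singleton'.mp t.2
    rw [← hs, mul_smul]
    exact Submodule.smul_mem _ _ (hfzN x)⟩
  have hφinj : Function.Injective φ := by
    rintro ⟨t, ht⟩ ⟨t', ht'⟩ hEq
    have h1 : t • x = t' • x := congrArg Subtype.val hEq
    have h2 : (t - t') • x = 0 := by rw [sub_smul, h1, sub_self]
    have h3 : t - t' ∈ a := by
      rw [ha, Submodule.mem_annihilator_span_singleton]; exact h2
    rw [hspan, Ideal.mem_span_singleton] at h3
    obtain ⟨u, hu⟩ := h3
    obtain ⟨s, hs⟩ := Ideal.mem_span_singleton'.mp ht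
    obtain ⟨s', hs'⟩ := Ideal.mem_span_singleton'.mp ht'
    have hz : t - t' = 0 := by
      have h4 : (t - t') * f = (t - t') := by
        rw [← hs, ← hs', ← sub_mul, mul_assoc, hff]
      calc t - t' = (t - t') * f := h4.symm
      _ = e * u * f := by rw [hu]
      _ = 0 := by rw [mul_assoc, mul_comm u f, ← mul_assoc, hef, zero_mul]
    ext
    exact sub_eq_zero.mp hz
  -- surjection If → N, t ↦ t • m
  let ψ : If → N := fun t => ⟨t.1 • m, by
    obtain ⟨s, hs⟩ := Ideal.mem_span_singleton'.mp t.2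
    rw [← hs, mul_smul]
    exact Submodule.smul_mem _ _ (Submodule.mem_span_singleton_self _)⟩
  have hψsurj : Function.Surjective ψ := by
    rintro ⟨n, hn⟩
    obtain ⟨c, hc⟩ := Submodule.mem_span_singleton.mp hn
    refine ⟨⟨c * f, Ideal.mem_span_singleton'.mpr ⟨c, rfl⟩⟩, ?_⟩
    ext
    show (c * f) • m = n
    rw [mul_smul, hc]
  -- cardinality
  have : Fintype If := Fintype.ofFinite _
  have : Fintype N := Fintype.ofFinite _
  have hcard1 : Fintype.card If ≤ Fintype.card N := Fintype.card_le_of_injective φ hφinj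
  have hcard2 : Fintype.card N ≤ Fintype.card If := Fintype.card_le_of_surjective ψ hψsurj
  have hcardeq : Fintype.card If = Fintype.card N := le_antisymm hcard1 hcard2
  have hφsurj : Function.Surjective φ := by
    let ε : N ≃ If := (Fintype.equivOfCardEq hcardeq).symm
    have hcomp : Function.Surjective (ε ∘ φ) :=
      Finite.injective_iff_surjective.mp (ε.injective.comp hφinj)
    intro n
    obtain ⟨t, ht⟩ := hcomp (ε n)
    exact ⟨t, ε.injective ht⟩
  -- N ≤ span {x}
  have hNle : N ≤ Submodule.span A {x} := by
    intro n hn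
    obtain ⟨t, ht⟩ := hφsurj ⟨n, hn⟩
    have : t.1 • x = n := congrArg Subtype.val ht
    rw [← this]
    exact Submodule.smul_mem _ _ (Submodule.mem_span_singleton_self _)
  -- conclude
  rw [eq_top_iff]
  intro z _
  have hz : z = e • z + f • z := by
    rw [hf, sub_smul, one_smul]; abel
  rw [hz]
  apply Submodule.add_mem
  · apply Submodule.mem_sup_right
    apply Submodule.smul_mem_smul _ Submodule.mem_top
    rw [hspan]; exact Ideal.mem_span_singleton_self e
  · exact Submodule.mem_sup_left (hNle (hfzN z))
end
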